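/- Let x_n, x ∈ D([0,∞),ℝ) with x_n → x in Skorokhod's J₁-topology, and let y_n, y : [0,∞) → [0,∞) be non-decreasing with y(0) = 0, y_n(∞) = y(∞) = ∞, y strictly increasing, and y_n(u) → y(u) for every u in a dense subset D ⊂ [0,∞). Then for every t ≥ 0 such that x is continuous at y⁻¹(t), we have x_n(y_n⁻¹(t)) → x(y⁻¹(t)) as n → ∞, where y_n⁻¹ and y⁻¹ denote the right-continuous inverses. -/

import Mathlib

open Filter Set
open scoped NNReal Topology

/-- A function `[0,∞) → E` is càdlàg: right-continuous with left limits. -/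
def Cadlag {E : Type*} [TopologicalSpace E] (f : ℝ≥0 → E) : Prop :=
  ∀ t : ℝ≥0, ContinuousWithinAt f (Set.Ici t) t ∧
    ∃ l : E, Tendsto f (nhdsWithin t (Set.Iio t)) (𝓝 l)

/-- Convergence in Skorokhod's J₁-topology on `D([0,∞), E)`: for every `T > 0`
there are continuous strictly increasing time changes `λ_n` with `λ_n(0) = 0`,
`λ_n(t) → ∞`, such that `sup_{[0,T]} ‖x_n ∘ λ_n − x‖ → 0` and
`sup_{[0,T]} |λ_n − id| → 0`. -/
def J1Tendsto {E : Type*} [NormedAddCommGroup E] (x : ℕ → ℝ≥0 → E) (y : ℝ≥0 → E) : Prop :=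
  ∀ T : ℝ≥0, 0 < T → ∃ lam : ℕ → ℝ≥0 → ℝ≥0,
    (∀ n, Continuous (lam n) ∧ StrictMono (lam n) ∧ lam n 0 = 0 ∧
      Tendsto (lam n) atTop atTop) ∧
    (∀ ε : ℝ, 0 < ε → ∀ᶠ n in atTop, ∀ t ∈ Set.Icc (0 : ℝ≥0) T,
      ‖x n (lam n t) - y t‖ < ε ∧ |((lam n t : ℝ)) - (t : ℝ)| < ε)

/-- The right-continuous inverse `m⁻¹(t) := inf{u ≥ 0 : m(u) > t}`. -/
noncomputable def rcInv (m : ℝ≥0 → ℝ≥0) (t : ℝ≥0) : ℝ≥0 :=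
  sInf {u | m u > t}

/-!
Strict monotonicity of `y` makes `y⁻¹` continuous at `t`, and sandwiching `y⁻¹(t)` between
points of `D` where `y_n` is eventually below resp. above `t` gives `y_n⁻¹(t) → y⁻¹(t)`.
It remains to see that J₁-convergence gives `x_n(u_n) → x(s)` whenever `u_n → s` and `x` is
continuous at `s`: writing `u_n = λ_n(τ_n)`, uniform closeness of `λ_n` to the identity gives
`τ_n → s`, and then `x_n(u_n) = x_n(λ_n(τ_n))` is uniformly close to `x(τ_n) → x(s)`.
-/

section RightContinuousInverse

variable {m : ℝ≥0 → ℝ≥0} {t u : ℝ≥0}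

lemma rcInv_le_of_lt_apply (h : t < m u) : rcInv m t ≤ u :=
  csInf_le (OrderBot.bddBelow _) h

lemma apply_le_of_lt_rcInv (h : u < rcInv m t) : m u ≤ t :=
  not_lt.1 fun h' => (rcInv_le_of_lt_apply h').not_gt h

lemma lt_apply_of_rcInv_lt (hm : Monotone m) (hne : ∃ v, t < m v) (h : rcInv m t < u) :
    t < m u := by
  obtain ⟨v, hv, hvu⟩ := exists_lt_of_csInf_lt hne h
  exact hv.trans_le (hm hvu.le)

lemma le_rcInv_of_apply_lt (hm : Monotone m) (hne : ∃ v, t < m v) (h : m u < t) :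
    u ≤ rcInv m t :=
  le_csInf hne fun _ hv => not_lt.1 fun hvu => (h.trans hv).not_ge (hm hvu.le)

theorem tendsto_rcInv {f : ℕ → ℝ≥0 → ℝ≥0} {g : ℝ≥0 → ℝ≥0} {D : Set ℝ≥0}
    (hf : ∀ n, Monotone (f n)) (hg : StrictMono g) (hD : Dense D)
    (hconv : ∀ u ∈ D, Tendsto (fun n => f n u) atTop (𝓝 (g u))) (ht : ∃ v, t < g v) :
    Tendsto (fun n => rcInv (f n) t) atTop (𝓝 (rcInv g t)) := by
  have eventually_lt_apply : ∀ u ∈ D, rcInv g t < u → ∀ᶠ n in atTop, t < f n u :=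
    fun u hu hlt =>
      (hconv u hu).eventually (lt_mem_nhds (lt_apply_of_rcInv_lt hg.monotone ht hlt))
  refine tendsto_order.2 ⟨fun b hb => ?_, fun b hb => ?_⟩
  · obtain ⟨u, hu, hbu, hus⟩ := hD.exists_between hb
    obtain ⟨w, huw, hws⟩ := exists_between hus
    have hgu : g u < t := (hg huw).trans_le (apply_le_of_lt_rcInv hws)
    -- A point `v > g⁻¹(t)` of `D` makes `{f n > t}` eventually nonempty.
    obtain ⟨v, hv, hsv⟩ := hD.exists_gt (rcInv g t)
    filter_upwards [(hconv u hu).eventually (gt_mem_nhds hgu), eventually_lt_apply v hv hsv]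
      with n hfu hfv
    exact hbu.trans_le (le_rcInv_of_apply_lt (hf n) ⟨v, hfv⟩ hfu)
  · obtain ⟨u, hu, hsu, hub⟩ := hD.exists_between hb
    filter_upwards [eventually_lt_apply u hu hsu] with n hn
    exact (rcInv_le_of_lt_apply hn).trans_lt hub

end RightContinuousInverse

lemma NNReal.surjective_of_continuous {f : ℝ≥0 → ℝ≥0} (hf : Continuous f) (h0 : f 0 = 0)
    (htop : Tendsto f atTop atTop) : Function.Surjective f := by
  intro u
  obtain ⟨M, hM⟩ := (htop.eventually_ge_atTop u).exists
  obtain ⟨v, -, hv⟩ := intermediate_value_Icc zero_le hf.continuousOn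
    (show u ∈ Icc (f 0) (f M) from ⟨h0.symm ▸ zero_le, hM⟩)
  exact ⟨v, hv⟩

theorem J1Tendsto.tendsto_apply_of_continuousAt {E : Type*} [NormedAddCommGroup E]
    {x : ℕ → ℝ≥0 → E} {xlim : ℝ≥0 → E} (hJ1 : J1Tendsto x xlim) {s : ℝ≥0}
    (hcont : ContinuousAt xlim s) {u : ℕ → ℝ≥0} (hu : Tendsto u atTop (𝓝 s)) :
    Tendsto (fun n => x n (u n)) atTop (𝓝 (xlim s)) := by
  obtain ⟨lam, hlam, hunif⟩ := hJ1 (s + 1) (by positivity)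
  choose τ hτ using fun n =>
    NNReal.surjective_of_continuous (hlam n).1 (hlam n).2.2.1 (hlam n).2.2.2 (u n)
  -- `λₙ(s + 1) > s + 1/2 > u n` for large `n`, so the preimages `τ n` stay in `[0, s + 1]`.
  have hτT : ∀ᶠ n in atTop, τ n ∈ Icc 0 (s + 1) := by
    have hu' : ∀ᶠ n in atTop, (u n : ℝ) < s + 1 / 2 :=
      (NNReal.tendsto_coe.2 hu).eventually (gt_mem_nhds (by linarith))
    filter_upwards [hunif (1 / 2) (by norm_num), hu'] with n hn hun
    have hT := (abs_lt.1 (hn (s + 1) ⟨zero_le, le_rfl⟩).2).1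
    push_cast at hT
    refine ⟨zero_le, ((hlam n).2.1.lt_iff_lt.1 ?_).le⟩
    rw [← NNReal.coe_lt_coe, hτ n]
    linarith
  have hsmall : ∀ ε > 0, ∀ᶠ n in atTop,
      ‖x n (u n) - xlim (τ n)‖ < ε ∧ |(u n : ℝ) - τ n| < ε := fun ε hε => by
    filter_upwards [hunif ε hε, hτT] with n hn hτn
    simpa only [hτ n] using hn (τ n) hτn
  have hdiff : Tendsto (fun n => x n (u n) - xlim (τ n)) atTop (𝓝 0) :=
    Metric.tendsto_nhds.2 fun ε hε => (hsmall ε hε).mono fun n hn => by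
      simpa [dist_eq_norm] using hn.1
  have hτs : Tendsto τ atTop (𝓝 s) := by
    have hlag : Tendsto (fun n => (u n : ℝ) - τ n) atTop (𝓝 0) :=
      Metric.tendsto_nhds.2 fun ε hε => (hsmall ε hε).mono fun n hn => by
        simpa [Real.dist_eq] using hn.2
    have := (NNReal.tendsto_coe.2 hu).sub hlag
    simp only [sub_sub_cancel, sub_zero] at this
    exact NNReal.tendsto_coe.1 this
  simpa using hdiff.add (hcont.tendsto.comp hτs)

theorem stmt3_general
    (x : ℕ → ℝ≥0 → ℝ) (xlim : ℝ≥0 → ℝ)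
    (hJ1 : J1Tendsto x xlim)
    (y : ℕ → ℝ≥0 → ℝ≥0) (ylim : ℝ≥0 → ℝ≥0)
    (hymono : ∀ n, Monotone (y n))
    (hylimtop : Tendsto ylim atTop atTop)
    (hystrict : StrictMono ylim)
    (D : Set ℝ≥0) (hD : Dense D)
    (hconv : ∀ u ∈ D, Tendsto (fun n => y n u) atTop (𝓝 (ylim u)))
    (t : ℝ≥0) (hcont : ContinuousAt xlim (rcInv ylim t)) :
    Tendsto (fun n => x n (rcInv (y n) t)) atTop (𝓝 (xlim (rcInv ylim t))) :=
  hJ1.tendsto_apply_of_continuousAt hcont <|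
    tendsto_rcInv hymono hystrict hD hconv (hylimtop.eventually_gt_atTop t).exists

/-- If `x_n → x` in the J₁-topology, `y_n, y` are non-decreasing
with `y 0 = 0`, `y_n(∞) = y(∞) = ∞`, `y` strictly increasing, and `y_n → y`
pointwise on a dense set, then `x_n(y_n⁻¹(t)) → x(y⁻¹(t))` at every `t ≥ 0` at
which `x` is continuous at `y⁻¹(t)`. -/
theorem stmt3
    (x : ℕ → ℝ≥0 → ℝ) (xlim : ℝ≥0 → ℝ)
    (hx : ∀ n, Cadlag (x n)) (hxlim : Cadlag xlim)
    (hJ1 : J1Tendsto x xlim)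
    (y : ℕ → ℝ≥0 → ℝ≥0) (ylim : ℝ≥0 → ℝ≥0)
    (hymono : ∀ n, Monotone (y n)) (hylimmono : Monotone ylim)
    (hy0 : ylim 0 = 0)
    (hytop : ∀ n, Tendsto (y n) atTop atTop) (hylimtop : Tendsto ylim atTop atTop)
    (hystrict : StrictMono ylim)
    (D : Set ℝ≥0) (hD : Dense D)
    (hconv : ∀ u ∈ D, Tendsto (fun n => y n u) atTop (𝓝 (ylim u)))
    (t : ℝ≥0) (hcont : ContinuousAt xlim (rcInv ylim t)) :
    Tendsto (fun n => x n (rcInv (y n) t)) atTop (𝓝 (xlim (rcInv ylim t))) :=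
  stmt3_general x xlim hJ1 y ylim hymono hylimtop hystrict D hD hconv t hcont
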